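/- Let p and q be positive integers with p ≥ 59q and p ≥ 16q^3 + 5q/16. Then the open interval (pq + 16q^3/p - 5q^4/p^2, pq + 16q^3/p + 5q^4/p^2) contains no integer. -/
import Mathlib


theorem no_integer_points_first_interval (p q : ℕ) (hp : 0 < p) (hq : 0 < q)
    (h1 : p ≥ 59 * q) (h2 : (p : ℝ) ≥ 16 * (q : ℝ)^3 + 5 * (q : ℝ) / 16) :
    ¬ ∃ n : ℤ, (n : ℝ) ∈ Set.Ioo ((p : ℝ) * q + 16 * (q : ℝ)^3 / p - 5 * (q : ℝ)^4 / (p : ℝ)^2)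
                                 ((p : ℝ) * q + 16 * (q : ℝ)^3 / p + 5 * (q : ℝ)^4 / (p : ℝ)^2) := by
  rintro ⟨n, hlo, hhi⟩
  have hp' : (0:ℝ) < p := by exact_mod_cast hp
  have hq' : (1:ℝ) ≤ q := by exact_mod_cast hq
  have hpq : (p:ℝ) ≥ 59*q := by exact_mod_cast h1
  have hpos : 5*(q:ℝ)^4/p^2 < 16*q^3/p := by
    rw [div_lt_div_iff₀ (by positivity) hp']
    have h16 : (0:ℝ) < 16*p - 5*q := by linarith
    nlinarith [mul_pos (mul_pos (pow_pos (by linarith : (0:ℝ) < q) 3) hp') h16]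
  have hle : 16*(q:ℝ)^3/p + 5*q^4/p^2 ≤ 1 := by
    rw [div_add_div _ _ (ne_of_gt hp') (by positivity), div_le_one (by positivity)]
    have hA : (p:ℝ)^2 * (16*q^3 + 5*q/16) ≤ (p:ℝ)^2 * p :=
      mul_le_mul_of_nonneg_left h2 (by positivity)
    have hB : (0:ℝ) ≤ q * p * (p - 16*q^3) := by
      have : (0:ℝ) ≤ (p:ℝ) - 16*q^3 := by nlinarith
      positivity
    nlinarith
  have key1 : ((p:ℝ)*q) < n := by linarith
  have key2 : (n:ℝ) < (p:ℝ)*q + 1 := by linarith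
  have hz1 : ((p*q : ℕ) : ℤ) < n := by exact_mod_cast key1
  have hz2 : n < ((p*q : ℕ) : ℤ) + 1 := by exact_mod_cast key2
  omega
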